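/- Let H be a real Hilbert space, C ⊆ H a nonempty convex subset, T, U : C → C nonexpansive maps with a common fixed point p, u, x₀ ∈ C, and (α_n), (β_n) ⊂ [0,1]. Let (x_n) be the alternating Halpern–Mann iteration with anchor u and starting point x₀, and let N ∈ ℕ, N ≥ 1, satisfy N ≥ max{‖x₀ − p‖, 2‖u − p‖}. Let ρ : (0,∞) → ℕ be an antitone function such that for all ε > 0 and all n ≥ ρ(ε), ‖x_n − T(x_n)‖ ≤ ε and ‖x_n − U(x_n)‖ ≤ ε. Then for every ε > 0 and every function Δ : ℕ → (0,1] there exist n ≤ Ψ(ε, Δ) and x ∈ F_N(p, Δ(n)) such that ⟨u − x, x_m − x⟩ ≤ ε for all m ≥ n, where Ψ(ε, Δ) := ρ(Φ(ε, Δ̄)) with Δ̄(η) := Δ(ρ(η)) for η ∈ (0,1], Φ(ε,δ) := φ(ε̃, δ̃)²/(24N) with ε̃ := ε²/(4N²), δ̃(ξ) := min{ δ(ξ²/(24N)), ξ²/(24N) }, φ(ε,δ) := min{ δ^{(i)}(1) : i ≤ r }, and r := ⌈N²/(4ε)⌉. -/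

import Mathlib

open RealInnerProductSpace

/-- `F_N(a, η) = {x ∈ C : ‖x - T x‖ ≤ η, ‖x - U x‖ ≤ η, ‖x - a‖ ≤ N}`. -/
def FN {H : Type*} [NormedAddCommGroup H] (C : Set H) (T U : H → H) (N : ℕ)
    (a : H) (η : ℝ) : Set H :=
  {x | x ∈ C ∧ ‖x - T x‖ ≤ η ∧ ‖x - U x‖ ≤ η ∧ ‖x - a‖ ≤ (N : ℝ)}

/-- `φ(ε, δ) = min{δ⁽ⁱ⁾(1) : i ≤ r}` with `r = ⌈N²/(4ε)⌉`. -/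
noncomputable def phi (N : ℕ) (ε : ℝ) (δ : ℝ → ℝ) : ℝ :=
  (Finset.range (⌈(N : ℝ) ^ 2 / (4 * ε)⌉₊ + 1)).inf' Finset.nonempty_range_add_one
    (fun i => δ^[i] 1)

/-- `Φ(ε, δ) = φ(ε̃, δ̃)²/(24N)` with `ε̃ = ε²/(4N²)` and
`δ̃(ξ) = min{δ(ξ²/(24N)), ξ²/(24N)}`. -/
noncomputable def Phi (N : ℕ) (ε : ℝ) (δ : ℝ → ℝ) : ℝ :=
  (phi N (ε ^ 2 / (4 * (N : ℝ) ^ 2))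
      (fun ξ => min (δ (ξ ^ 2 / (24 * (N : ℝ)))) (ξ ^ 2 / (24 * (N : ℝ))))) ^ 2
    / (24 * (N : ℝ))

/-- `Ψ(ε, Δ) = ρ(Φ(ε, Δ̄))` with `Δ̄(η) = Δ(ρ(η))`. -/
noncomputable def Psi (N : ℕ) (ρ : ℝ → ℕ) (ε : ℝ) (Δ : ℕ → ℝ) : ℕ :=
  ρ (Phi N ε (fun η => Δ (ρ η)))

/-!
Suppose the conclusion fails. Starting from `a = p`, repeatedly replace `a` by
`(1 - t) a + t x_m` with `t = ε / (4N²)`, where `x_m` is an iterate with `⟪u - a, x_m - a⟫ > ε`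
that is a good approximate common fixed point. In a Hilbert space every such step lowers
`‖u - a‖²` by at least `ε² / (4N²)`, and a convex combination of two `η`-approximate fixed points
of a nonexpansive map is an `O(√(Nη))`-approximate fixed point; the map `δ̃` compensates for this
square-root loss, so that the new point again lies in a set `F_N(p, Δ(n))` with `n ≤ Ψ(ε, Δ)` and
the construction can continue. Since `‖u - p‖² ≤ N²/4`, it cannot run for `r + 1` steps.
-/

open Set Metric

def NonexpansiveOn {H : Type*} [NormedAddCommGroup H] (S : H → H) (C : Set H) : Prop :=
  ∀ x ∈ C, ∀ y ∈ C, ‖S x - S y‖ ≤ ‖x - y‖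

section FN

variable {H : Type*} [NormedAddCommGroup H] {C : Set H} {T U : H → H} {N : ℕ} {p : H}

theorem FN_mono {η η' : ℝ} (h : η ≤ η') : FN C T U N p η ⊆ FN C T U N p η' :=
  fun _ ⟨hC, hT, hU, hp⟩ => ⟨hC, hT.trans h, hU.trans h, hp⟩

theorem self_mem_FN (hp : p ∈ C) (hTp : T p = p) (hUp : U p = p) {η : ℝ} (hη : 0 ≤ η) :
    p ∈ FN C T U N p η := by
  refine ⟨hp, ?_, ?_, ?_⟩ <;> simp [hTp, hUp, hη]

theorem NonexpansiveOn.mapsTo_inter_closedBall {S : H → H} (hS : NonexpansiveOn S C)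
    (hSC : MapsTo S C C) (hp : p ∈ C) (hSp : S p = p) (r : ℝ) :
    MapsTo S (C ∩ closedBall p r) (C ∩ closedBall p r) := by
  rintro y ⟨hyC, hyr⟩
  refine ⟨hSC hyC, mem_closedBall_iff_norm.2 ?_⟩
  calc ‖S y - p‖ = ‖S y - S p‖ := by rw [hSp]
    _ ≤ ‖y - p‖ := hS y hyC p hp
    _ ≤ r := mem_closedBall_iff_norm.1 hyr

end FN

section Iteration

variable {H : Type*} [NormedAddCommGroup H] [NormedSpace ℝ H]

theorem halpernMann_mem {K : Set H} (hK : Convex ℝ K) {T U : H → H} (hT : MapsTo T K K)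
    (hU : MapsTo U K K) {u : H} (hu : u ∈ K) {α β : ℕ → ℝ} (hα : ∀ n, α n ∈ Icc (0 : ℝ) 1)
    (hβ : ∀ n, β n ∈ Icc (0 : ℝ) 1) {x : ℕ → H} (hx0 : x 0 ∈ K)
    (hxodd : ∀ n, x (2 * n + 1) = (1 - α n) • T (x (2 * n)) + α n • u)
    (hxeven : ∀ n, x (2 * n + 2) = (1 - β n) • U (x (2 * n + 1)) + β n • x (2 * n + 1))
    (m : ℕ) : x m ∈ K := by
  have hodd : ∀ n, x (2 * n) ∈ K → x (2 * n + 1) ∈ K := fun n h => hxodd n ▸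
    hK (hT h) hu (sub_nonneg.2 (hα n).2) (hα n).1 (sub_add_cancel 1 _)
  have heven : ∀ n, x (2 * n) ∈ K := by
    intro n
    induction n with
    | zero => exact hx0
    | succ n ih =>
      have h := hodd n ih
      exact hxeven n ▸ hK (hU h) h (sub_nonneg.2 (hβ n).2) (hβ n).1 (sub_add_cancel 1 _)
  obtain ⟨n, rfl | rfl⟩ := Nat.even_or_odd' m
  exacts [heven n, hodd n (heven n)]

end Iteration

theorem succ_mul_le_of_descent {α : Type*} {P : ℕ → α → Prop} {E : α → ℝ} {R : ℕ} {e : ℝ}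
    {a₀ : α} (h₀ : P (R + 1) a₀) (hE : ∀ a, 0 ≤ E a)
    (hstep : ∀ k ≤ R, ∀ a, P (k + 1) a → ∃ b, P k b ∧ E b ≤ E a - e) :
    (R + 1) * e ≤ E a₀ := by
  have hdesc : ∀ i ≤ R + 1, ∃ a, P (R + 1 - i) a ∧ E a ≤ E a₀ - i * e := by
    intro i
    induction i with
    | zero => exact fun _ => ⟨a₀, h₀, by simp⟩
    | succ i ih =>
      intro hi
      obtain ⟨a, ha, hEa⟩ := ih (by omega)
      obtain ⟨b, hb, hEb⟩ :=
        hstep (R - i) (by omega) a (by rwa [show R - i + 1 = R + 1 - i by omega])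
      exact ⟨b, by rwa [show R + 1 - (i + 1) = R - i by omega], by push_cast; linarith⟩
  obtain ⟨a, -, hEa⟩ := hdesc (R + 1) le_rfl
  have := hE a
  push_cast at hEa
  linarith

noncomputable def deltaTilde (N : ℕ) (δ : ℝ → ℝ) (ξ : ℝ) : ℝ :=
  min (δ (ξ ^ 2 / (24 * (N : ℝ)))) (ξ ^ 2 / (24 * (N : ℝ)))

theorem phi_eq_iterate {N : ℕ} {ε : ℝ} {δ : ℝ → ℝ} (hδ : Antitone fun i => δ^[i] 1) :
    phi N ε δ = δ^[⌈(N : ℝ) ^ 2 / (4 * ε)⌉₊] 1 :=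
  le_antisymm (Finset.inf'_le _ (Finset.self_mem_range_succ _))
    (Finset.le_inf' _ _ fun _ hi => hδ (Nat.lt_succ_iff.mp (Finset.mem_range.mp hi)))

theorem Phi_eq_iterate {N : ℕ} {ε : ℝ} {δ : ℝ → ℝ}
    (hδ : Antitone fun i => (deltaTilde N δ)^[i] 1) :
    Phi N ε δ = ((deltaTilde N δ)^[⌈(N : ℝ) ^ 2 / (4 * (ε ^ 2 / (4 * (N : ℝ) ^ 2)))⌉₊] 1) ^ 2
      / (24 * N) := by
  rw [← phi_eq_iterate hδ]
  rfl

section deltaTilde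

variable {N : ℕ} {δ : ℝ → ℝ}

theorem deltaTilde_le_self (hN : 1 ≤ N) {ξ : ℝ} (hξ : ξ ∈ Ioc (0 : ℝ) 1) :
    deltaTilde N δ ξ ≤ ξ := by
  have hN' : (1 : ℝ) ≤ N := Nat.one_le_cast.mpr hN
  refine (min_le_right _ _).trans ?_
  rw [div_le_iff₀ (by positivity)]
  nlinarith [hξ.1, hξ.2]

theorem deltaTilde_mem_Ioc (hN : 1 ≤ N) (hδ : ∀ ξ, δ ξ ∈ Ioc (0 : ℝ) 1) {ξ : ℝ}
    (hξ : ξ ∈ Ioc (0 : ℝ) 1) : deltaTilde N δ ξ ∈ Ioc (0 : ℝ) 1 := by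
  have hN' : (0 : ℝ) < N := Nat.cast_pos.mpr hN
  have hξ0 := hξ.1
  exact ⟨lt_min (hδ _).1 (by positivity), (deltaTilde_le_self hN hξ).trans hξ.2⟩

theorem iterate_deltaTilde_mem_Ioc (hN : 1 ≤ N) (hδ : ∀ ξ, δ ξ ∈ Ioc (0 : ℝ) 1) (k : ℕ) :
    (deltaTilde N δ)^[k] 1 ∈ Ioc (0 : ℝ) 1 :=
  MapsTo.iterate (fun _ => deltaTilde_mem_Ioc hN hδ) k ⟨one_pos, le_rfl⟩

theorem antitone_iterate_deltaTilde (hN : 1 ≤ N) (hδ : ∀ ξ, δ ξ ∈ Ioc (0 : ℝ) 1) :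
    Antitone fun k => (deltaTilde N δ)^[k] 1 :=
  antitone_nat_of_succ_le fun k => (Function.iterate_succ_apply' _ k 1).trans_le
    (deltaTilde_le_self hN (iterate_deltaTilde_mem_Ioc hN hδ k))

end deltaTilde

section Hilbert

variable {H : Type*} [NormedAddCommGroup H] [InnerProductSpace ℝ H]

theorem norm_sub_combo_sq (z a b : H) (t : ℝ) :
    ‖z - ((1 - t) • a + t • b)‖ ^ 2
      = (1 - t) * ‖z - a‖ ^ 2 + t * ‖z - b‖ ^ 2 - t * (1 - t) * ‖a - b‖ ^ 2 := by
  simp only [← real_inner_self_eq_norm_sq, inner_sub_left, inner_sub_right,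
    inner_add_left, inner_add_right, real_inner_smul_left, real_inner_smul_right,
    real_inner_comm a z, real_inner_comm b z, real_inner_comm b a]
  ring

theorem norm_sub_combo_sq_le {u a y : H} {t D ε : ℝ} (ht : 0 ≤ t) (hy : ‖y - a‖ ≤ D)
    (hε : ε ≤ ⟪u - a, y - a⟫) :
    ‖u - ((1 - t) • a + t • y)‖ ^ 2 ≤ ‖u - a‖ ^ 2 - 2 * t * ε + t ^ 2 * D ^ 2 := by
  have hsplit : u - ((1 - t) • a + t • y) = (u - a) - t • (y - a) := by module
  have hyD : ‖y - a‖ ^ 2 ≤ D ^ 2 := pow_le_pow_left₀ (norm_nonneg _) hy 2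
  rw [hsplit, norm_sub_sq_real, norm_smul, real_inner_smul_right, Real.norm_of_nonneg ht]
  nlinarith [mul_le_mul_of_nonneg_left hyD (sq_nonneg t), mul_le_mul_of_nonneg_left hε ht]

theorem norm_combo_sub_apply_sq_le {C : Set H} {S : H → H} (hC : Convex ℝ C)
    (hS : NonexpansiveOn S C) {a b : H} (ha : a ∈ C) (hb : b ∈ C) {t η : ℝ} (ht0 : 0 ≤ t)
    (ht1 : t ≤ 1) (haS : ‖a - S a‖ ≤ η) (hbS : ‖b - S b‖ ≤ η) :
    ‖(1 - t) • a + t • b - S ((1 - t) • a + t • b)‖ ^ 2 ≤ ‖a - b‖ * η + η ^ 2 := by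
  set c := (1 - t) • a + t • b
  have hc : c ∈ C := hC ha hb (sub_nonneg.2 ht1) ht0 (sub_add_cancel 1 t)
  have hca : ‖c - a‖ = t * ‖a - b‖ := by
    rw [show c - a = t • (b - a) by module, norm_smul, Real.norm_of_nonneg ht0, norm_sub_rev]
  have hcb : ‖c - b‖ = (1 - t) * ‖a - b‖ := by
    rw [show c - b = (1 - t) • (a - b) by module, norm_smul,
      Real.norm_of_nonneg (sub_nonneg.2 ht1)]
  -- `S c` is close to both `a` and `b`, hence to `c` by `norm_sub_combo_sq`
  have hSa : ‖S c - a‖ ≤ t * ‖a - b‖ + η := by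
    calc ‖S c - a‖ ≤ ‖S c - S a‖ + ‖S a - a‖ := norm_sub_le_norm_sub_add_norm_sub _ _ _
      _ ≤ ‖c - a‖ + η := add_le_add (hS c hc a ha) (by rwa [norm_sub_rev])
      _ = t * ‖a - b‖ + η := by rw [hca]
  have hSb : ‖S c - b‖ ≤ (1 - t) * ‖a - b‖ + η := by
    calc ‖S c - b‖ ≤ ‖S c - S b‖ + ‖S b - b‖ := norm_sub_le_norm_sub_add_norm_sub _ _ _
      _ ≤ ‖c - b‖ + η := add_le_add (hS c hc b hb) (by rwa [norm_sub_rev])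
      _ = (1 - t) * ‖a - b‖ + η := by rw [hcb]
  have hη : 0 ≤ η := (norm_nonneg _).trans haS
  have hd : 0 ≤ ‖a - b‖ := norm_nonneg _
  rw [norm_sub_rev, norm_sub_combo_sq]
  nlinarith [mul_le_mul_of_nonneg_left (pow_le_pow_left₀ (norm_nonneg _) hSa 2)
      (sub_nonneg.2 ht1), mul_le_mul_of_nonneg_left (pow_le_pow_left₀ (norm_nonneg _) hSb 2) ht0,
    mul_nonneg hd hη, sq_nonneg (1 - 2 * t)]

theorem exists_mem_FN_norm_sub_sq_le {C : Set H} {T U : H → H} (hC : Convex ℝ C)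
    (hT : NonexpansiveOn T C) (hU : NonexpansiveOn U C) {N : ℕ} (hN : 1 ≤ N) {p u a y : H}
    (hu : 2 * ‖u - p‖ ≤ N) {c : ℝ} (hc : c ∈ Ioc 0 1)
    (ha : a ∈ FN C T U N p (c ^ 2 / (24 * N))) (hy : y ∈ FN C T U N p (c ^ 2 / (24 * N)))
    {ε : ℝ} (hε : 0 ≤ ε) (hεy : ε ≤ ⟪u - a, y - a⟫) :
    ∃ b ∈ FN C T U N p c, ‖u - b‖ ^ 2 ≤ ‖u - a‖ ^ 2 - ε ^ 2 / (4 * N ^ 2) := by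
  obtain ⟨haC, haT, haU, hap⟩ := ha
  obtain ⟨hyC, hyT, hyU, hyp⟩ := hy
  obtain ⟨hc0, hc1⟩ := hc
  have hN' : (1 : ℝ) ≤ N := Nat.one_le_cast.mpr hN
  have hya : ‖y - a‖ ≤ 2 * N := by
    calc ‖y - a‖ ≤ ‖y - p‖ + ‖a - p‖ := by simpa only [dist_eq_norm] using dist_triangle_right y a p
      _ ≤ 2 * N := by linarith
  -- `ε ≤ ‖u - a‖ ‖y - a‖ ≤ (3N/2)(2N)`, so the step length `t` below is at most one
  have hε3 : ε ≤ 3 * N ^ 2 := by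
    have hua : ‖u - a‖ ≤ 3 / 2 * N := by
      calc ‖u - a‖ ≤ ‖u - p‖ + ‖a - p‖ := by
            simpa only [dist_eq_norm] using dist_triangle_right u a p
        _ ≤ 3 / 2 * N := by linarith
    nlinarith [real_inner_le_norm (u - a) (y - a), norm_nonneg (u - a), norm_nonneg (y - a)]
  set t := ε / (2 * N) ^ 2
  have ht0 : 0 ≤ t := by positivity
  have ht1 : t ≤ 1 := by rw [div_le_one (by positivity)]; nlinarith
  set η := c ^ 2 / (24 * N)
  have hcη : ‖a - y‖ * η + η ^ 2 ≤ c ^ 2 := by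
    have hη1 : η ≤ c ^ 2 / 24 := div_le_div_of_nonneg_left (sq_nonneg c) (by norm_num) (by linarith)
    have hNη : N * η = c ^ 2 / 24 := by simp only [η]; field_simp
    nlinarith [norm_sub_rev a y, sq_nonneg η, pow_le_one₀ hc0.le hc1 (n := 2)]
  have happrox : ∀ S : H → H, NonexpansiveOn S C → ‖a - S a‖ ≤ η → ‖y - S y‖ ≤ η →
      ‖(1 - t) • a + t • y - S ((1 - t) • a + t • y)‖ ≤ c := fun S hS haS hyS =>
    (sq_le_sq₀ (norm_nonneg _) hc0.le).1
      ((norm_combo_sub_apply_sq_le hC hS haC hyC ht0 ht1 haS hyS).trans hcη)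
  refine ⟨(1 - t) • a + t • y, ⟨hC haC hyC (sub_nonneg.2 ht1) ht0 (sub_add_cancel 1 t),
    happrox T hT haT hyT, happrox U hU haU hyU, ?_⟩, ?_⟩
  · have hball := (convex_closedBall p (N : ℝ)) (mem_closedBall_iff_norm.2 hap)
      (mem_closedBall_iff_norm.2 hyp) (sub_nonneg.2 ht1) ht0 (sub_add_cancel 1 t)
    exact mem_closedBall_iff_norm.1 hball
  · calc ‖u - ((1 - t) • a + t • y)‖ ^ 2 ≤ ‖u - a‖ ^ 2 - 2 * t * ε + t ^ 2 * (2 * N) ^ 2 :=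
          norm_sub_combo_sq_le ht0 hya hεy
      _ = ‖u - a‖ ^ 2 - ε ^ 2 / (4 * N ^ 2) := by simp only [t]; field_simp; ring

theorem exists_descent_step {C : Set H} {T U : H → H} (hC : Convex ℝ C) (hT : NonexpansiveOn T C)
    (hU : NonexpansiveOn U C) {N : ℕ} (hN : 1 ≤ N) {p u : H} (hu : 2 * ‖u - p‖ ≤ N)
    {x : ℕ → H} (hx : ∀ m, x m ∈ C ∩ closedBall p N) {ρ : ℝ → ℕ}
    (hρ : ∀ η : ℝ, 0 < η → ∀ n ≥ ρ η, ‖x n - T (x n)‖ ≤ η ∧ ‖x n - U (x n)‖ ≤ η)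
    {δ : ℝ → ℝ} {ε c : ℝ} (hε : 0 ≤ ε) (hc : c ∈ Ioc 0 1)
    (hfar : ∀ a ∈ FN C T U N p (δ (c ^ 2 / (24 * N))),
      ∃ m ≥ ρ (c ^ 2 / (24 * N)), ε < ⟪u - a, x m - a⟫)
    {a : H} (ha : a ∈ FN C T U N p (deltaTilde N δ c)) :
    ∃ b ∈ FN C T U N p c, ‖u - b‖ ^ 2 ≤ ‖u - a‖ ^ 2 - ε ^ 2 / (4 * N ^ 2) := by
  obtain ⟨m, hm, hεm⟩ := hfar a (FN_mono (min_le_left _ _) ha)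
  have hη : 0 < c ^ 2 / (24 * N) := by
    have := hc.1
    have : (0 : ℝ) < N := Nat.cast_pos.mpr hN
    positivity
  obtain ⟨hmT, hmU⟩ := hρ _ hη m hm
  exact exists_mem_FN_norm_sub_sq_le hC hT hU hN hu hc (FN_mono (min_le_right _ _) ha)
    ⟨(hx m).1, hmT, hmU, mem_closedBall_iff_norm.1 (hx m).2⟩ hε hεm.le

end Hilbert

theorem stmt15_general {H : Type*} [NormedAddCommGroup H] [InnerProductSpace ℝ H]
    (C : Set H) (hCconv : Convex ℝ C)
    (T U : H → H) (hTmaps : Set.MapsTo T C C) (hUmaps : Set.MapsTo U C C)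
    (hTne : ∀ x ∈ C, ∀ y ∈ C, ‖T x - T y‖ ≤ ‖x - y‖)
    (hUne : ∀ x ∈ C, ∀ y ∈ C, ‖U x - U y‖ ≤ ‖x - y‖)
    (p : H) (hp : p ∈ C) (hTp : T p = p) (hUp : U p = p)
    (u x₀ : H) (hu : u ∈ C) (hx₀ : x₀ ∈ C)
    (α β : ℕ → ℝ)
    (hα : ∀ n, α n ∈ Set.Icc (0 : ℝ) 1) (hβ : ∀ n, β n ∈ Set.Icc (0 : ℝ) 1)
    (x : ℕ → H) (hx0 : x 0 = x₀)
    (hxodd : ∀ n, x (2 * n + 1) = (1 - α n) • T (x (2 * n)) + α n • u)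
    (hxeven : ∀ n, x (2 * n + 2) = (1 - β n) • U (x (2 * n + 1)) + β n • x (2 * n + 1))
    (N : ℕ) (hN1 : 1 ≤ N)
    (hN : max ‖x₀ - p‖ (2 * ‖u - p‖) ≤ (N : ℝ))
    (ρ : ℝ → ℕ)
    (hρanti : ∀ ε ε' : ℝ, 0 < ε → ε ≤ ε' → ρ ε' ≤ ρ ε)
    (hρ : ∀ ε : ℝ, 0 < ε → ∀ n ≥ ρ ε, ‖x n - T (x n)‖ ≤ ε ∧ ‖x n - U (x n)‖ ≤ ε) :
    ∀ ε : ℝ, 0 < ε → ∀ Δ : ℕ → ℝ, (∀ n, Δ n ∈ Set.Ioc (0 : ℝ) 1) →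
      ∃ n ≤ Psi N ρ ε Δ, ∃ x' ∈ FN C T U N p (Δ n),
        ∀ m ≥ n, ⟪u - x', x m - x'⟫ ≤ ε := by
  intro ε hε Δ hΔ
  by_contra! hfar
  obtain ⟨hx₀p, hup⟩ := max_le_iff.mp hN
  have hN' : (0 : ℝ) < N := Nat.cast_pos.mpr hN1
  have hxK : ∀ m, x m ∈ C ∩ closedBall p N :=
    halpernMann_mem (hCconv.inter (convex_closedBall p N))
    (NonexpansiveOn.mapsTo_inter_closedBall hTne hTmaps hp hTp N)
    (NonexpansiveOn.mapsTo_inter_closedBall hUne hUmaps hp hUp N)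
    ⟨hu, mem_closedBall_iff_norm.2 (by linarith [norm_nonneg (u - p)])⟩ hα hβ
    (hx0 ▸ ⟨hx₀, mem_closedBall_iff_norm.2 hx₀p⟩) hxodd hxeven
  set δ := deltaTilde N fun η => Δ (ρ η)
  set R := ⌈(N : ℝ) ^ 2 / (4 * (ε ^ 2 / (4 * (N : ℝ) ^ 2)))⌉₊
  have hc := iterate_deltaTilde_mem_Ioc hN1 fun η => hΔ (ρ η)
  have hcanti := antitone_iterate_deltaTilde hN1 fun η => hΔ (ρ η)
  have hdesc : (R + 1) * (ε ^ 2 / (4 * N ^ 2)) ≤ ‖u - p‖ ^ 2 := by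
    refine succ_mul_le_of_descent (P := fun k a => a ∈ FN C T U N p (δ^[k] 1))
      (E := fun a => ‖u - a‖ ^ 2)
      (self_mem_FN hp hTp hUp (hc _).1.le) (fun _ => sq_nonneg _) ?_
    intro k hk a ha
    refine exists_descent_step hCconv hTne hUne hN1 hup hxK hρ hε.le (hc k)
      (fun a ha => hfar _ ?_ a ha) (by rwa [Function.iterate_succ_apply'] at ha)
    rw [Psi, Phi_eq_iterate hcanti]
    refine hρanti _ _ (by have := (hc R).1; positivity) ?_
    exact div_le_div_of_nonneg_right (pow_le_pow_left₀ (hc R).1.le (hcanti hk) 2) (by positivity)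
  have hR : (N : ℝ) ^ 2 / (4 * (ε ^ 2 / (4 * (N : ℝ) ^ 2))) ≤ R := Nat.le_ceil _
  rw [div_le_iff₀ (by positivity)] at hR
  nlinarith [norm_nonneg (u - p), show 0 < ε ^ 2 / (4 * N ^ 2) by positivity]

/-- Quantitative removal of sequential weak compactness: there exist
`n ≤ Ψ(ε, Δ)` and `x ∈ F_N(p, Δ(n))` such that `⟪u - x, x_m - x⟫ ≤ ε` for
all `m ≥ n`. -/
theorem stmt15 {H : Type*} [NormedAddCommGroup H] [InnerProductSpace ℝ H]
    (C : Set H) (hCne : C.Nonempty) (hCconv : Convex ℝ C)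
    (T U : H → H) (hTmaps : Set.MapsTo T C C) (hUmaps : Set.MapsTo U C C)
    (hTne : ∀ x ∈ C, ∀ y ∈ C, ‖T x - T y‖ ≤ ‖x - y‖)
    (hUne : ∀ x ∈ C, ∀ y ∈ C, ‖U x - U y‖ ≤ ‖x - y‖)
    (p : H) (hp : p ∈ C) (hTp : T p = p) (hUp : U p = p)
    (u x₀ : H) (hu : u ∈ C) (hx₀ : x₀ ∈ C)
    (α β : ℕ → ℝ)
    (hα : ∀ n, α n ∈ Set.Icc (0 : ℝ) 1) (hβ : ∀ n, β n ∈ Set.Icc (0 : ℝ) 1)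
    (x : ℕ → H) (hx0 : x 0 = x₀)
    (hxodd : ∀ n, x (2 * n + 1) = (1 - α n) • T (x (2 * n)) + α n • u)
    (hxeven : ∀ n, x (2 * n + 2) = (1 - β n) • U (x (2 * n + 1)) + β n • x (2 * n + 1))
    (N : ℕ) (hN1 : 1 ≤ N)
    (hN : max ‖x₀ - p‖ (2 * ‖u - p‖) ≤ (N : ℝ))
    (ρ : ℝ → ℕ)
    (hρanti : ∀ ε ε' : ℝ, 0 < ε → ε ≤ ε' → ρ ε' ≤ ρ ε)
    (hρ : ∀ ε : ℝ, 0 < ε → ∀ n ≥ ρ ε, ‖x n - T (x n)‖ ≤ ε ∧ ‖x n - U (x n)‖ ≤ ε) :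
    ∀ ε : ℝ, 0 < ε → ∀ Δ : ℕ → ℝ, (∀ n, Δ n ∈ Set.Ioc (0 : ℝ) 1) →
      ∃ n ≤ Psi N ρ ε Δ, ∃ x' ∈ FN C T U N p (Δ n),
        ∀ m ≥ n, ⟪u - x', x m - x'⟫ ≤ ε :=
  stmt15_general C hCconv T U hTmaps hUmaps hTne hUne p hp hTp hUp u x₀ hu hx₀ α β hα hβ x hx0 hxodd
    hxeven N hN1 hN ρ hρanti hρ
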